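/- In U(sl_2) with standard generators H, E, F ([H,E]=2E, [H,F]=−2F, [E,F]=H), define for t ∈ ℂ the formal operator p(t; H,E,F) = Σ_{k≥0} F^k E^k (1/k!) Π_{j=0}^{k−1} 1/(t−H−j). Let L_m be the irreducible (m+1)-dimensional sl_2-module with basis v^m_0,…,v^m_m where H v^m_k = (m−2k) v^m_k, F v^m_k = (k+1) v^m_{k+1}, E v^m_k = (m−k+1) v^m_{k−1}. Then for λ = l ω_1 with l ∈ ℤ_{≥0} and any k, p((λ,α_1^∨); H,E,F) v^m_k = [ ((λ,α_1^∨)+2)((λ,α_1^∨)+3)···((λ,α_1^∨)+k+1) / ( ((λ,α_1^∨)−m+k+1)((λ,α_1^∨)−m+k+2)···((λ,α_1^∨)−m+2k) ) ] v^m_k, i.e. the operator acts diagonally with the stated eigenvalues (interpreted as rational functions of (λ,α_1^∨) = l). -/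

import Mathlib

/- STATEMENT 6: action of p(t;H,E,F) on the basis v^m_k of the irreducible
(m+1)-dimensional sl₂-module L_m, realized concretely as Fin (m+1) → ℂ with
H, E, F given by their matrices in the basis v^m_0, …, v^m_m. -/

open scoped BigOperators

noncomputable section

/-- Matrix of `H` on `L_m`: `H v_k = (m - 2k) v_k`. -/
def Hmat (m : ℕ) : Matrix (Fin (m+1)) (Fin (m+1)) ℂ :=
  Matrix.diagonal fun k => (m : ℂ) - 2 * (k : ℕ)

/-- Matrix of `E` on `L_m`: `E v_k = (m - k + 1) v_{k-1}`. -/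
def Emat (m : ℕ) : Matrix (Fin (m+1)) (Fin (m+1)) ℂ :=
  Matrix.of fun j k => if (k : ℕ) = (j : ℕ) + 1 then (m : ℂ) - (j : ℕ) else 0

/-- Matrix of `F` on `L_m`: `F v_k = (k+1) v_{k+1}`. -/
def Fmat (m : ℕ) : Matrix (Fin (m+1)) (Fin (m+1)) ℂ :=
  Matrix.of fun j k => if (j : ℕ) = (k : ℕ) + 1 then ((j : ℕ) : ℂ) else 0

/-- The operator `p(t; H, E, F) = Σ_k F^k E^k (1/k!) Π_{j=0}^{k-1} (t - H - j)⁻¹`.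
On `L_m` the series truncates (terms with `k > m` vanish since `E^{m+1} = 0`). -/
def pMat (m : ℕ) (t : ℂ) (H E F : Matrix (Fin (m+1)) (Fin (m+1)) ℂ) :
    Matrix (Fin (m+1)) (Fin (m+1)) ℂ :=
  ∑ k ∈ Finset.range (m + 2),
    ((Nat.factorial k : ℂ))⁻¹ •
      (F ^ k * E ^ k *
        ((List.range k).map fun j =>
          Ring.inverse (t • (1 : Matrix (Fin (m+1)) (Fin (m+1)) ℂ) - H - (j : ℂ) • 1)).prod)

/-- The basis vector `v^m_k` of `L_m`. -/
def vvec (m : ℕ) (k : Fin (m+1)) : Fin (m+1) → ℂ := Pi.single k 1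

/-!
Write `(a)⁽ⁱ⁾ = a (a+1) ⋯ (a+i-1)` (`ascPochhammer`) and `(x)₍ᵢ₎ = x (x-1) ⋯ (x-i+1)`
(`descPochhammer`). Since `v_k` is an `H`-eigenvector, `∏_{j<i} (t - H - j)⁻¹` acts on it by
`1 / (x)₍ᵢ₎` with `x = t - m + 2k`, and `F^i E^i v_k = i! C(k,i) (m-k+1)⁽ⁱ⁾ v_k`. So `p` acts on
`v_k` by `∑_i C(k,i) (m-k+1)⁽ⁱ⁾ / (x)₍ᵢ₎`. As `(x)₍ₖ₎ = (t-m+k+1)⁽ᵏ⁾` splits as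
`(t-m+k+1)⁽ᵏ⁻ⁱ⁾ (x)₍ᵢ₎`, clearing this denominator turns the claim into the Chu–Vandermonde
identity `(a+b)⁽ᵏ⁾ = ∑_i C(k,i) a⁽ⁱ⁾ b⁽ᵏ⁻ⁱ⁾` with `a = m-k+1`, `b = t-m+k+1`, `a + b = t + 2`.
-/

open Matrix Finset Polynomial

theorem ascPochhammer_eval_eq_prod_range {R : Type*} [CommSemiring R] (n : ℕ) (r : R) :
    (ascPochhammer R n).eval r = ∏ j ∈ range n, (r + j) := by
  induction n with
  | zero => simp
  | succ n ih => rw [ascPochhammer_succ_eval, ih, prod_range_succ]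

theorem ascPochhammer_eval_natCast_add_one {K : Type*} [Field K] [CharZero K] (b i : ℕ) :
    (ascPochhammer K i).eval ((b : K) + 1) = i.factorial * ((b + i).choose i : K) := by
  rw [Nat.cast_choose_eq_descPochhammer_div, descPochhammer_eval_eq_ascPochhammer,
    mul_div_cancel₀ _ (Nat.cast_ne_zero.mpr i.factorial_ne_zero)]
  push_cast
  ring_nf

theorem ascPochhammer_eval_add {R : Type*} [CommRing R] (a b : R) (k : ℕ) :
    (ascPochhammer R k).eval (a + b) = ∑ ij ∈ antidiagonal k,
      (k.choose ij.1 : R) * ((ascPochhammer R ij.1).eval a * (ascPochhammer R ij.2).eval b) := by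
  have hdesc (n : ℕ) (r : R) : (descPochhammer ℤ n).smeval r = (descPochhammer R n).eval r := by
    rw [descPochhammer_smeval_eq_ascPochhammer, ascPochhammer_smeval_eq_eval,
      descPochhammer_eval_eq_ascPochhammer]
  have hasc (n : ℕ) (r : R) :
      (ascPochhammer R n).eval r = (-1) ^ n * (descPochhammer R n).eval (-r) := by
    rw [← ascPochhammer_eval_neg_eq_descPochhammer, neg_neg]
  rw [hasc, neg_add, ← hdesc, Ring.descPochhammer_smeval_add _ (Commute.all _ _), mul_sum]
  refine sum_congr rfl fun ij hij => ?_
  rw [HasAntidiagonal.mem_antidiagonal] at hij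
  rw [hasc, hasc, hdesc, hdesc, ← hij, pow_add]
  ring

theorem sum_antidiagonal_choose_mul_ascPochhammer_div {K : Type*} [Field K] (a y : K) (k : ℕ)
    (hy : (ascPochhammer K k).eval y ≠ 0) :
    ∑ ij ∈ antidiagonal k, (k.choose ij.1 : K) * (ascPochhammer K ij.1).eval a /
        (ascPochhammer K ij.1).eval (y + ij.2) =
      (ascPochhammer K k).eval (a + y) / (ascPochhammer K k).eval y := by
  rw [eq_div_iff hy, sum_mul, ascPochhammer_eval_add]
  refine sum_congr rfl fun ij hij => ?_
  rw [HasAntidiagonal.mem_antidiagonal, add_comm] at hij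
  have hsplit : (ascPochhammer K k).eval y =
      (ascPochhammer K ij.2).eval y * (ascPochhammer K ij.1).eval (y + ij.2) := by
    rw [← hij, ← ascPochhammer_mul, eval_mul, eval_comp, eval_add, eval_X, eval_natCast]
  rw [hsplit] at hy ⊢
  field_simp [right_ne_zero_of_mul hy]

section Resolvent

variable {n K : Type*} [Fintype n] [DecidableEq n] [Field K]

theorem ringInverse_mulVec_eq_inv_smul {A : Matrix n n K} (hA : IsUnit A) {v : n → K} {c : K}
    (hc : c ≠ 0) (hv : A *ᵥ v = c • v) : Ring.inverse A *ᵥ v = c⁻¹ • v := by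
  have hAv : Ring.inverse A *ᵥ (A *ᵥ v) = v := by
    rw [mulVec_mulVec, ← nonsing_inv_eq_ringInverse,
      nonsing_inv_mul _ ((isUnit_iff_isUnit_det A).mp hA), one_mulVec]
  rw [hv, mulVec_smul] at hAv
  rw [← hAv, smul_smul, inv_mul_cancel₀ hc, one_smul, hAv]

def resolventProd (t : K) (H : Matrix n n K) (i : ℕ) : Matrix n n K :=
  ((List.range i).map fun j : ℕ =>
    Ring.inverse (t • (1 : Matrix n n K) - H - (j : K) • 1)).prod

theorem resolventProd_mulVec {H : Matrix n n K} {v : n → K} {μ : K} (hv : H *ᵥ v = μ • v)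
    (t : K) (i : ℕ) (hH : ∀ j < i, IsUnit (t • 1 - H - (j : K) • 1))
    (hμ : ∀ j < i, t - μ - j ≠ 0) :
    resolventProd t H i *ᵥ v = ((descPochhammer K i).eval (t - μ))⁻¹ • v := by
  induction i with
  | zero => simp [resolventProd]
  | succ i ih =>
    have hfactor : (t • (1 : Matrix n n K) - H - (i : K) • 1) *ᵥ v = (t - μ - i) • v := by
      rw [sub_mulVec, sub_mulVec, smul_mulVec, smul_mulVec, one_mulVec, hv, sub_smul, sub_smul]
    rw [resolventProd, List.range_succ, List.map_append, List.prod_append, List.map_singleton,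
      List.prod_singleton, ← mulVec_mulVec,
      ringInverse_mulVec_eq_inv_smul (hH i i.lt_succ_self) (hμ i i.lt_succ_self) hfactor,
      mulVec_smul, ← resolventProd,
      ih (fun j hj => hH j (by omega)) (fun j hj => hμ j (by omega)),
      smul_smul, descPochhammer_succ_eval, mul_inv, mul_comm]

end Resolvent

section IrreducibleModule

variable (m : ℕ)

/-- `v^m_n` indexed by `ℕ` and extended by zero past `m`, so that the actions of `E` and `F`
below need no range conditions. -/
def basisVec (n : ℕ) : Fin (m+1) → ℂ := fun j => if (j : ℕ) = n then 1 else 0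

def pTerm (t : ℂ) (H E F : Matrix (Fin (m+1)) (Fin (m+1)) ℂ) (i : ℕ) :
    Matrix (Fin (m+1)) (Fin (m+1)) ℂ :=
  (i.factorial : ℂ)⁻¹ • (F ^ i * E ^ i * resolventProd t H i)

theorem pMat_eq_sum_pTerm (t : ℂ) (H E F : Matrix (Fin (m+1)) (Fin (m+1)) ℂ) :
    pMat m t H E F = ∑ i ∈ range (m + 2), pTerm m t H E F i := by
  -- in `pMat`, `List.range k` is coerced to a `List ℂ`, which elaborates to a `do` block
  simp only [pMat, List.pure_def, List.bind_eq_flatMap, ← List.map_eq_flatMap, List.map_map]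
  rfl

theorem vvec_eq_basisVec (k : Fin (m+1)) : vvec m k = basisVec m k := by
  ext j
  simp [vvec, basisVec, Pi.single_apply, Fin.ext_iff]

theorem mulVec_basisVec_apply (n : ℕ) (A : Matrix (Fin (m+1)) (Fin (m+1)) ℂ) (j : Fin (m+1)) :
    (A *ᵥ basisVec m n) j = if h : n < m + 1 then A j ⟨n, h⟩ else 0 := by
  split_ifs with h
  · rw [show basisVec m n = Pi.single ⟨n, h⟩ 1 by
      ext; simp [basisVec, Pi.single_apply, Fin.ext_iff]]
    simp [mulVec_single]
  · rw [show basisVec m n = 0 from funext fun l => if_neg (by have := l.isLt; omega)]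
    simp

theorem Hmat_mulVec_basisVec (n : ℕ) :
    Hmat m *ᵥ basisVec m n = ((m : ℂ) - 2 * n) • basisVec m n := by
  ext j
  rw [mulVec_basisVec_apply]
  simp only [Order.lt_add_one_iff, Hmat, diagonal_apply, Fin.ext_iff, dite_eq_ite, Pi.smul_apply,
    basisVec, smul_eq_mul, mul_ite, mul_one, mul_zero]
  split_ifs <;> simp_all
  omega

theorem Emat_mulVec_basisVec_zero : Emat m *ᵥ basisVec m 0 = 0 := by
  ext j
  rw [mulVec_basisVec_apply]
  simp [Emat]

theorem Emat_mulVec_basisVec_succ (n : ℕ) :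
    Emat m *ᵥ basisVec m (n + 1) = ((m : ℂ) - n) • basisVec m n := by
  ext j
  rw [mulVec_basisVec_apply]
  simp only [Order.lt_add_one_iff, Order.add_one_le_iff, Emat, of_apply, Nat.add_right_cancel_iff,
    dite_eq_ite, Pi.smul_apply, basisVec, smul_eq_mul, mul_ite, mul_one, mul_zero]
  by_cases hj : (j : ℕ) = n
  · subst hj
    rcases Nat.lt_or_ge (j : ℕ) m with h | h
    · simp [h]
    · simp [le_antisymm (Nat.lt_succ_iff.mp j.isLt) h]
  · simp [hj, Ne.symm hj]

theorem Fmat_mulVec_basisVec (n : ℕ) :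
    Fmat m *ᵥ basisVec m n = ((n : ℂ) + 1) • basisVec m (n + 1) := by
  ext j
  rw [mulVec_basisVec_apply]
  simp only [Order.lt_add_one_iff, Fmat, of_apply, Pi.smul_apply, basisVec, smul_eq_mul, mul_ite,
    mul_one, mul_zero]
  split_ifs <;> simp_all
  omega

theorem Emat_pow_mulVec_basisVec_add (b i : ℕ) :
    Emat m ^ i *ᵥ basisVec m (b + i) =
      (descPochhammer ℂ i).eval ((m : ℂ) - b) • basisVec m b := by
  induction i with
  | zero => simp
  | succ i ih =>
    rw [pow_succ, ← mulVec_mulVec, ← add_assoc, Emat_mulVec_basisVec_succ, mulVec_smul, ih,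
      smul_smul, descPochhammer_succ_eval]
    push_cast
    ring_nf

theorem Emat_pow_mulVec_basisVec_of_lt {n i : ℕ} (h : n < i) :
    Emat m ^ i *ᵥ basisVec m n = 0 := by
  obtain ⟨c, rfl⟩ : ∃ c, i = c + 1 + n := ⟨i - n - 1, by omega⟩
  have hE := Emat_pow_mulVec_basisVec_add m 0 n
  rw [zero_add] at hE
  rw [pow_add, pow_succ, ← mulVec_mulVec, hE, ← mulVec_mulVec, mulVec_smul,
    Emat_mulVec_basisVec_zero, smul_zero, mulVec_zero]

theorem Fmat_pow_mulVec_basisVec (b i : ℕ) :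
    Fmat m ^ i *ᵥ basisVec m b =
      (ascPochhammer ℂ i).eval ((b : ℂ) + 1) • basisVec m (b + i) := by
  induction i with
  | zero => simp
  | succ i ih =>
    rw [pow_succ', ← mulVec_mulVec, ih, mulVec_smul, Fmat_mulVec_basisVec, smul_smul,
      ascPochhammer_succ_eval, ← add_assoc]
    push_cast
    ring_nf

variable (t : ℂ)

theorem isUnit_smul_one_sub_Hmat_sub (c : ℂ)
    (h : ∀ s : Fin (m+1), t - ((m : ℂ) - 2 * (s : ℕ)) - c ≠ 0) :
    IsUnit (t • (1 : Matrix (Fin (m+1)) (Fin (m+1)) ℂ) - Hmat m - c • 1) := by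
  rw [smul_one_eq_diagonal, smul_one_eq_diagonal, Hmat, diagonal_sub, diagonal_sub,
    isUnit_diagonal, Pi.isUnit_iff]
  exact fun s => (h s).isUnit

theorem resolventProd_mulVec_basisVec {n i : ℕ} (hn : n ≤ m)
    (hgen : ∀ s : Fin (m+1), ∀ j < i, t - ((m : ℂ) - 2 * (s : ℕ)) - j ≠ 0) :
    resolventProd t (Hmat m) i *ᵥ basisVec m n =
      ((descPochhammer ℂ i).eval (t - ((m : ℂ) - 2 * n)))⁻¹ • basisVec m n :=
  resolventProd_mulVec (Hmat_mulVec_basisVec m n) t i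
    (fun j hj => isUnit_smul_one_sub_Hmat_sub m t j fun s => hgen s j hj)
    (fun j hj => by simpa using hgen ⟨n, by omega⟩ j hj)

theorem pTerm_mulVec_basisVec {b i : ℕ} (hbi : b + i ≤ m)
    (hgen : ∀ s : Fin (m+1), ∀ j < i, t - ((m : ℂ) - 2 * (s : ℕ)) - j ≠ 0) :
    pTerm m t (Hmat m) (Emat m) (Fmat m) i *ᵥ basisVec m (b + i) =
      (((b + i).choose i : ℂ) * (ascPochhammer ℂ i).eval ((m : ℂ) - (b + i : ℕ) + 1) /
        (ascPochhammer ℂ i).eval (t - m + (b + i : ℕ) + 1 + b)) • basisVec m (b + i) := by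
  rw [pTerm, smul_mulVec, ← mulVec_mulVec, ← mulVec_mulVec,
    resolventProd_mulVec_basisVec m t hbi hgen, mulVec_smul, Emat_pow_mulVec_basisVec_add,
    mulVec_smul, mulVec_smul, Fmat_pow_mulVec_basisVec, smul_smul, smul_smul, smul_smul,
    ascPochhammer_eval_natCast_add_one, descPochhammer_eval_eq_ascPochhammer,
    descPochhammer_eval_eq_ascPochhammer]
  congr 1
  rw [show t - ((m : ℂ) - 2 * (b + i : ℕ)) - i + 1 = t - m + (b + i : ℕ) + 1 + b by
      push_cast; ring,
    show (m : ℂ) - b - i + 1 = (m : ℂ) - (b + i : ℕ) + 1 by push_cast; ring]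
  field_simp [Nat.cast_ne_zero.mpr i.factorial_ne_zero]

theorem pTerm_mulVec_basisVec_of_lt {k i : ℕ} (hk : k ≤ m) (hki : k < i)
    (hgen : ∀ s : Fin (m+1), ∀ j < i, t - ((m : ℂ) - 2 * (s : ℕ)) - j ≠ 0) :
    pTerm m t (Hmat m) (Emat m) (Fmat m) i *ᵥ basisVec m k = 0 := by
  rw [pTerm, smul_mulVec, ← mulVec_mulVec, ← mulVec_mulVec,
    resolventProd_mulVec_basisVec m t hk hgen, mulVec_smul, Emat_pow_mulVec_basisVec_of_lt m hki,
    smul_zero, mulVec_zero, smul_zero]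

theorem pMat_mulVec_basisVec {k : ℕ} (hk : k ≤ m)
    (hgen : ∀ s : Fin (m+1), ∀ j ∈ range (m + 2),
      t - ((m : ℂ) - 2 * (s : ℕ)) - (j : ℕ) ≠ 0) :
    pMat m t (Hmat m) (Emat m) (Fmat m) *ᵥ basisVec m k =
      (∑ ij ∈ antidiagonal k,
        (k.choose ij.1 : ℂ) * (ascPochhammer ℂ ij.1).eval ((m : ℂ) - k + 1) /
          (ascPochhammer ℂ ij.1).eval (t - m + k + 1 + ij.2)) • basisVec m k := by
  have hgen' (i : ℕ) (hi : i ≤ m + 1) :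
      ∀ s : Fin (m+1), ∀ j < i, t - ((m : ℂ) - 2 * (s : ℕ)) - j ≠ 0 :=
    fun s j hj => hgen s j (mem_range.mpr (by omega))
  have hvanish : ∀ i ∈ range (m + 2), i ∉ range (k + 1) →
      pTerm m t (Hmat m) (Emat m) (Fmat m) i *ᵥ basisVec m k = 0 := by
    intro i hi hik
    simp only [mem_range] at hi hik
    exact pTerm_mulVec_basisVec_of_lt m t hk (by omega) (hgen' i (by omega))
  rw [pMat_eq_sum_pTerm, sum_mulVec, sum_smul,
    ← sum_subset (range_subset_range.mpr (by omega : k + 1 ≤ m + 2)) hvanish,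
    Nat.sum_antidiagonal_eq_sum_range_succ_mk]
  refine sum_congr rfl fun i hi => ?_
  rw [mem_range] at hi
  have hterm := pTerm_mulVec_basisVec m t (b := k - i) (by omega) (hgen' i (by omega))
  rwa [Nat.sub_add_cancel (by omega : i ≤ k)] at hterm

end IrreducibleModule

/-- `p((λ,α₁^∨); H,E,F) v^m_k
  = [ ((λ,α₁^∨)+2)⋯((λ,α₁^∨)+k+1) / ( ((λ,α₁^∨)-m+k+1)⋯((λ,α₁^∨)-m+2k) ) ] v^m_k`,
as rational functions of `t = (λ,α₁^∨)`, i.e. for every `t` avoiding the poles. -/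
theorem stmt6 (m : ℕ) (k : Fin (m+1)) (t : ℂ)
    (hgen : ∀ s : Fin (m+1), ∀ j ∈ Finset.range (m + 2),
      t - ((m : ℂ) - 2 * (s : ℕ)) - (j : ℕ) ≠ 0)
    (hden : ∀ j ∈ Finset.range (k : ℕ), t - (m : ℂ) + (k : ℕ) + 1 + (j : ℕ) ≠ 0) :
    Matrix.mulVec (pMat m t (Hmat m) (Emat m) (Fmat m)) (vvec m k) =
      ((∏ j ∈ Finset.range (k : ℕ), (t + 2 + (j : ℕ))) /
        (∏ j ∈ Finset.range (k : ℕ), (t - (m : ℂ) + (k : ℕ) + 1 + (j : ℕ)))) • vvec m k := by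
  have hden' : (ascPochhammer ℂ k).eval (t - m + k + 1) ≠ 0 := by
    rw [ascPochhammer_eval_eq_prod_range]
    exact prod_ne_zero_iff.mpr hden
  rw [vvec_eq_basisVec, pMat_mulVec_basisVec m t k.is_le hgen,
    sum_antidiagonal_choose_mul_ascPochhammer_div _ _ _ hden',
    show (m : ℂ) - k + 1 + (t - m + k + 1) = t + 2 by ring,
    ascPochhammer_eval_eq_prod_range, ascPochhammer_eval_eq_prod_range]

end
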